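/- Suppose R takes values in {1,...,J}, L = (L_{(r)}, L_{(-r)}) is partitioned per pattern r, and the nonresponse probabilities satisfy the logit discrete choice model P(R=r | L=l) = Odds_r(l_{(r)}) / (1 + Σ_{s≠1} Odds_s(l_{(s)})) for r ≠ 1, where each Odds_r depends only on the observed components l_{(r)}. Then for every r ≠ 1 and every l, the conditional distribution of L_{(-r)} given R=r and L_{(r)} equals the conditional distribution of L_{(-r)} given R=1 and L_{(r)}: P(L_{(-r)} = a | R=r, L_{(r)} = b) = P(L_{(-r)} = a | R=1, L_{(r)} = b) (the complete-case missing value restriction). -/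
import Mathlib


open Finset MeasureTheory

open Classical in
noncomputable def pr {Ω : Type*} [Fintype Ω] (P : Ω → ℝ) (E : Ω → Prop) : ℝ :=
  ∑ ω, if E ω then P ω else 0

noncomputable def cpr {Ω : Type*} [Fintype Ω] (P : Ω → ℝ) (E F : Ω → Prop) : ℝ :=
  pr P (fun ω => E ω ∧ F ω) / pr P F

noncomputable def ex {Ω : Type*} [Fintype Ω] (P : Ω → ℝ) (U : Ω → ℝ) : ℝ :=
  ∑ ω, P ω * U ω

open Classical in
noncomputable def cex {Ω : Type*} [Fintype Ω] (P : Ω → ℝ) (U : Ω → ℝ) (F : Ω → Prop) : ℝ :=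
  (∑ ω, if F ω then P ω * U ω else 0) / pr P F

set_option linter.unusedVariables false

lemma ite_iff {c d : Prop} {_ : Decidable c} {_ : Decidable d} (h : c ↔ d) (x y : ℝ) :
    (if c then x else y) = (if d then x else y) := by
  by_cases hc : c
  · rw [if_pos hc, if_pos (h.mp hc)]
  · rw [if_neg hc, if_neg (fun hd => hc (h.mpr hd))]

lemma pr_filter {Ω : Type*} [Fintype Ω] (P : Ω → ℝ) (E : Ω → Prop) [DecidablePred E] :
    pr P E = ∑ ω ∈ Finset.univ.filter E, P ω := by
  rw [Finset.sum_filter]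
  unfold pr
  exact Finset.sum_congr rfl fun ω _ => ite_iff Iff.rfl _ _

lemma pr_congr {Ω : Type*} [Fintype Ω] (P : Ω → ℝ) {E F : Ω → Prop}
    (h : ∀ ω, E ω ↔ F ω) : pr P E = pr P F := by
  classical
  rw [pr_filter, pr_filter]
  exact Finset.sum_congr (by ext ω; simp [h ω]) fun ω _ => rfl

lemma pr_nonneg {Ω : Type*} [Fintype Ω] {P : Ω → ℝ} (hP : ∀ ω, 0 ≤ P ω) (E : Ω → Prop) :
    0 ≤ pr P E := by
  classical
  rw [pr_filter]
  exact Finset.sum_nonneg fun ω _ => hP ω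

lemma pr_mono {Ω : Type*} [Fintype Ω] {P : Ω → ℝ} (hP : ∀ ω, 0 ≤ P ω) (E F : Ω → Prop) :
    pr P (fun ω => E ω ∧ F ω) ≤ pr P F := by
  classical
  rw [pr_filter, pr_filter]
  refine Finset.sum_le_sum_of_subset_of_nonneg ?_ fun ω _ _ => hP ω
  intro ω hω
  simp only [Finset.mem_filter] at hω ⊢
  exact ⟨hω.1, hω.2.2⟩

lemma pr_and_zero {Ω : Type*} [Fintype Ω] {P : Ω → ℝ} (hP : ∀ ω, 0 ≤ P ω) {E F : Ω → Prop}
    (h : pr P F = 0) : pr P (fun ω => E ω ∧ F ω) = 0 :=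
  le_antisymm (h ▸ pr_mono hP E F) (pr_nonneg hP _)

open Classical in
lemma pr_fiber {Ω A : Type*} [Fintype Ω] (P : Ω → ℝ) (L : Ω → A) (E : Ω → Prop) (Q : A → Prop) :
    pr P (fun ω => E ω ∧ Q (L ω)) =
      ∑ l ∈ (Finset.univ.image L).filter Q, pr P (fun ω => E ω ∧ L ω = l) := by
  rw [pr_filter]
  rw [← Finset.sum_fiberwise_of_maps_to (g := L)
    (t := (Finset.univ.image L).filter Q) (fun ω hω => by
      simp only [Finset.mem_filter] at hω ⊢
      exact ⟨Finset.mem_image_of_mem L (Finset.mem_univ ω), hω.2.2⟩)]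
  refine Finset.sum_congr rfl fun l hl => ?_
  rw [pr_filter]
  refine Finset.sum_congr ?_ fun ω _ => rfl
  have hQ : Q l := (Finset.mem_filter.mp hl).2
  ext ω
  simp only [Finset.mem_filter, Finset.mem_univ, true_and, Finset.filter_filter]
  constructor
  · rintro ⟨⟨hE, _⟩, hL⟩; exact ⟨hE, hL⟩
  · rintro ⟨hE, hL⟩; exact ⟨⟨hE, hL ▸ hQ⟩, hL⟩

open Classical in
lemma pr_total {Ω S : Type*} [Fintype Ω] [Fintype S] (P : Ω → ℝ) (R : Ω → S) (F : Ω → Prop) :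
    pr P F = ∑ s : S, pr P (fun ω => R ω = s ∧ F ω) := by
  rw [pr_filter]
  rw [← Finset.sum_fiberwise_of_maps_to (g := R) (t := Finset.univ)
    (fun ω _ => Finset.mem_univ _)]
  refine Finset.sum_congr rfl fun s _ => ?_
  rw [pr_filter]
  refine Finset.sum_congr ?_ fun ω _ => rfl
  ext ω
  simp only [Finset.mem_filter, Finset.mem_univ, true_and, Finset.filter_filter]
  tauto

/-- Under the logit discrete choice model with odds depending only on the
observed components, the CCMV restriction holds: the conditional law of the missing
components given the observed ones is the same for pattern `r` and for complete cases.
Patterns are `Fin (J+1)` with `0` the complete-case pattern; `O r` extracts the observed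
coordinates under pattern `r` and `M r` the missing ones. -/
theorem stmt3 {Ω A : Type*} [Fintype Ω] {J : ℕ} {B C : Fin (J + 1) → Type*}
    (P : Ω → ℝ) (hP : ∀ ω, 0 ≤ P ω) (hPsum : ∑ ω, P ω = 1)
    (R : Ω → Fin (J + 1)) (L : Ω → A)
    (O : (r : Fin (J + 1)) → A → B r) (M : (r : Fin (J + 1)) → A → C r)
    (Odds : (r : Fin (J + 1)) → B r → ℝ) (hOdds : ∀ r b, 0 < Odds r b)
    (hLDCM : ∀ r, r ≠ 0 → ∀ l : A, 0 < pr P (fun ω => L ω = l) →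
      cpr P (fun ω => R ω = r) (fun ω => L ω = l) =
        Odds r (O r l) / (1 + ∑ s ∈ Finset.univ.erase (0 : Fin (J + 1)), Odds s (O s l)))
    (hpos : ∀ l : A, 0 < pr P (fun ω => L ω = l) →
      0 < cpr P (fun ω => R ω = 0) (fun ω => L ω = l))
    (r : Fin (J + 1)) (hr : r ≠ 0) (a : C r) (b : B r)
    (hb : 0 < pr P (fun ω => R ω = r ∧ O r (L ω) = b)) :
    cpr P (fun ω => M r (L ω) = a) (fun ω => R ω = r ∧ O r (L ω) = b) =
      cpr P (fun ω => M r (L ω) = a) (fun ω => R ω = 0 ∧ O r (L ω) = b) := by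
  classical
  have key : ∀ l : A, pr P (fun ω => R ω = r ∧ L ω = l)
      = Odds r (O r l) * pr P (fun ω => R ω = 0 ∧ L ω = l) := by
    intro l
    set S : ℝ := ∑ s ∈ Finset.univ.erase (0 : Fin (J + 1)), Odds s (O s l) with hSdef
    have hSnn : 0 ≤ S := Finset.sum_nonneg fun s _ => (hOdds s _).le
    have hS1 : (0:ℝ) < 1 + S := by linarith
    rcases eq_or_lt_of_le (pr_nonneg hP (fun ω => L ω = l)) with h0 | hl
    · rw [pr_and_zero hP h0.symm, pr_and_zero hP h0.symm, mul_zero]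
    · have htot := pr_total P R (fun ω => L ω = l)
      have hne : pr P (fun ω => L ω = l) ≠ 0 := ne_of_gt hl
      have hpart : ∀ s : Fin (J+1), s ≠ 0 → pr P (fun ω => R ω = s ∧ L ω = l)
          = pr P (fun ω => L ω = l) * (Odds s (O s l) / (1 + S)) := by
        intro s hs
        have h2 := hLDCM s hs l hl
        rw [← hSdef] at h2
        simp only [cpr] at h2
        rw [div_eq_iff hne] at h2
        rw [h2]; ring
      have hsum2 : ∑ s ∈ Finset.univ.erase (0 : Fin (J + 1)),
          pr P (fun ω => R ω = s ∧ L ω = l)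
          = pr P (fun ω => L ω = l) * (S / (1 + S)) := by
        rw [Finset.sum_congr rfl (fun s hs => hpart s (Finset.ne_of_mem_erase hs)),
          ← Finset.mul_sum, ← Finset.sum_div, ← hSdef]
      have hsplit : pr P (fun ω => L ω = l)
          = pr P (fun ω => R ω = 0 ∧ L ω = l)
            + ∑ s ∈ Finset.univ.erase (0 : Fin (J + 1)),
                pr P (fun ω => R ω = s ∧ L ω = l) := by
        rw [htot, ← Finset.add_sum_erase _ _ (Finset.mem_univ (0 : Fin (J+1)))]
      have h0eq : pr P (fun ω => R ω = 0 ∧ L ω = l)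
          = pr P (fun ω => L ω = l) / (1 + S) := by
        rw [hsum2] at hsplit
        field_simp at hsplit ⊢
        linarith
      rw [hpart r hr, h0eq]
      ring
  have agg : ∀ Q : A → Prop, (∀ l, Q l → O r l = b) →
      pr P (fun ω => R ω = r ∧ Q (L ω)) = Odds r b * pr P (fun ω => R ω = 0 ∧ Q (L ω)) := by
    intro Q hQ
    rw [pr_fiber P L (fun ω => R ω = r) Q, pr_fiber P L (fun ω => R ω = 0) Q, Finset.mul_sum]
    refine Finset.sum_congr rfl fun l hl => ?_
    rw [key l, hQ l (Finset.mem_filter.mp hl).2]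
  have hnum := agg (fun l => O r l = b ∧ M r l = a) (fun l h => h.1)
  have hden := agg (fun l => O r l = b) (fun l h => h)
  unfold cpr
  have e1 : pr P (fun ω => M r (L ω) = a ∧ R ω = r ∧ O r (L ω) = b)
      = pr P (fun ω => R ω = r ∧ O r (L ω) = b ∧ M r (L ω) = a) :=
    pr_congr P fun ω => by tauto
  have e2 : pr P (fun ω => M r (L ω) = a ∧ R ω = 0 ∧ O r (L ω) = b)
      = pr P (fun ω => R ω = 0 ∧ O r (L ω) = b ∧ M r (L ω) = a) :=
    pr_congr P fun ω => by tauto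
  rw [e1, e2, hnum, hden]
  exact mul_div_mul_left _ _ (ne_of_gt (hOdds r b))
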